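/- The map C defined by the explicit order-matching formulas is the clearing operator obtained by order matching: C maps E into L; for every X ∈ E one has X ∈ L if and only if C(X) = X; and, writing Z(X) = X − C(X) for the executed orders, for every X ∈ E: (A1) Z(X) ∈ E (both components are componentwise nonnegative); (A2) |Z(X)⁺| = |Z(X)⁻|; (A3) sup supp(Z(X)⁻) ≤ inf supp(Z(X)⁺); (A4) sup supp(Z(X)⁻) ≤ inf supp(C(X)⁻) and inf supp(Z(X)⁺) ≥ sup supp(C(X)⁺). -/
import Mathlib


open scoped BigOperators

namespace OB

/-- The space of order configurations `E = ℕ^d × ℕ^d`: buy side and sell side. -/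
abbrev E (d : ℕ) := (Fin d → ℕ) × (Fin d → ℕ)

/-- Price support of a vector: the set of prices `j ∈ {1,…,d}` with a positive queue. -/
def supp {d : ℕ} (Z : Fin d → ℕ) : Finset ℕ :=
  (Finset.univ.filter fun j : Fin d => 0 < Z j).image fun j : Fin d => (j : ℕ) + 1

/-- `sup supp`, with the convention `sup ∅ = 0`. -/
def supSupp {d : ℕ} (Z : Fin d → ℕ) : ℕ := (supp Z).sup id

/-- `inf supp`, with the convention `inf ∅ = d+1`. -/
def infSupp {d : ℕ} (Z : Fin d → ℕ) : ℕ :=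
  if h : (supp Z).Nonempty then (supp Z).min' h else d + 1

/-- bid price `b(X) = sup supp(X⁺)`. -/
def bid {d : ℕ} (X : E d) : ℕ := supSupp X.1

/-- ask price `a(X) = inf supp(X⁻)`. -/
def ask {d : ℕ} (X : E d) : ℕ := infSupp X.2

/-- Admissible limit order book configurations: `a(X) > b(X)`. -/
def Lset (d : ℕ) : Set (E d) := {X | bid X < ask X}

/-- Entry of a vector at price `i` (prices run from 1 to d; 0 outside this range). -/
def ent {d : ℕ} (z : Fin d → ℕ) (i : ℕ) : ℕ :=
  if h : 1 ≤ i ∧ i ≤ d then z ⟨i - 1, by omega⟩ else 0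

/-- Standard basis vector at price `i`. -/
def e {d : ℕ} (i : ℕ) : Fin d → ℕ := fun j => if (j : ℕ) + 1 = i then 1 else 0

/-- `τ_i`: zero out all entries at prices `> i`. -/
def tauLow {d : ℕ} (i : ℤ) (z : Fin d → ℕ) : Fin d → ℕ :=
  fun j => if ((j : ℕ) + 1 : ℤ) ≤ i then z j else 0

/-- `τ^i`: zero out all entries at prices `< i`. -/
def tauHigh {d : ℕ} (i : ℤ) (z : Fin d → ℕ) : Fin d → ℕ :=
  fun j => if i ≤ ((j : ℕ) + 1 : ℤ) then z j else 0

/-- `B_X(k) = Σ_{i ≥ k} X⁺_i`. -/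
def BX {d : ℕ} (X : E d) (k : ℕ) : ℕ := ∑ j : Fin d, if k ≤ (j : ℕ) + 1 then X.1 j else 0

/-- `S_X(k) = Σ_{i ≤ k} X⁻_i`. -/
def SX {d : ℕ} (X : E d) (k : ℕ) : ℕ := ∑ j : Fin d, if (j : ℕ) + 1 ≤ k then X.2 j else 0

/-- `g_X(k) = S_X(k) − B_X(k)`. -/
def gX {d : ℕ} (X : E d) (k : ℕ) : ℤ := (SX X k : ℤ) - (BX X k : ℤ)

/-- `p_A(X) = inf{k ∈ {1,…,d} : g_X(k) > 0}`, convention `inf ∅ = d+1`. -/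
def pA {d : ℕ} (X : E d) : ℕ :=
  if h : ((Finset.Icc 1 d).filter fun k => 0 < gX X k).Nonempty
  then ((Finset.Icc 1 d).filter fun k => 0 < gX X k).min' h else d + 1

/-- `p_B(X) = sup{k ∈ {1,…,d} : g_X(k) < 0}`, convention `sup ∅ = 0`. -/
def pB {d : ℕ} (X : E d) : ℕ :=
  ((Finset.Icc 1 d).filter fun k => gX X k < 0).sup id

/-- `B_X⁻¹(z) = sup{i ∈ {1,…,d} : B_X(i) ≥ z}`, convention `sup ∅ = 0`. -/
def Binv {d : ℕ} (X : E d) (z : ℕ) : ℕ :=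
  ((Finset.Icc 1 d).filter fun i => z ≤ BX X i).sup id

/-- `S_X⁻¹(z) = inf{i ∈ {1,…,d} : S_X(i) ≥ z}`, convention `inf ∅ = d+1`. -/
def Sinv {d : ℕ} (X : E d) (z : ℕ) : ℕ :=
  if h : ((Finset.Icc 1 d).filter fun i => z ≤ SX X i).Nonempty
  then ((Finset.Icc 1 d).filter fun i => z ≤ SX X i).min' h else d + 1

/-- Buy side after order-matching clearing (Eq. (11) of the paper):
`C(X)⁺ = τ_{p_B}(X⁺)` if `g_X(p_B) ≤ −X⁺_{p_B}`, and
`C(X)⁺ = τ_{p_B−1}(X⁺) − min{0, g_X(p_B)}·e_{p_B}` otherwise. -/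
def clearPlus {d : ℕ} (X : E d) : Fin d → ℕ :=
  if gX X (pB X) ≤ -(ent X.1 (pB X) : ℤ) then tauLow (pB X : ℤ) X.1
  else fun j => tauLow ((pB X : ℤ) - 1) X.1 j + (max 0 (-(gX X (pB X)))).toNat * e (pB X) j

/-- Sell side after order-matching clearing (Eq. (12) of the paper):
`C(X)⁻ = τ^{p_A}(X⁻)` if `g_X(p_A) ≥ X⁻_{p_A}`, and
`C(X)⁻ = τ^{p_A+1}(X⁻) + max{0, g_X(p_A)}·e_{p_A}` otherwise. -/
def clearMinus {d : ℕ} (X : E d) : Fin d → ℕ :=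
  if (ent X.2 (pA X) : ℤ) ≤ gX X (pA X) then tauHigh (pA X : ℤ) X.2
  else fun j => tauHigh ((pA X : ℤ) + 1) X.2 j + (max 0 (gX X (pA X))).toNat * e (pA X) j

/-- The order-matching clearing operator. -/
def clear {d : ℕ} (X : E d) : E d := (clearPlus X, clearMinus X)

/-- Price support of an integer-valued vector. -/
def suppZ {d : ℕ} (W : Fin d → ℤ) : Finset ℕ :=
  (Finset.univ.filter fun j : Fin d => 0 < W j).image fun j : Fin d => (j : ℕ) + 1

/-- `sup supp` of an integer-valued vector, convention `sup ∅ = 0`. -/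
def supSuppZ {d : ℕ} (W : Fin d → ℤ) : ℕ := (suppZ W).sup id

/-- `inf supp` of an integer-valued vector, convention `inf ∅ = d+1`. -/
def infSuppZ {d : ℕ} (W : Fin d → ℤ) : ℕ :=
  if h : (suppZ W).Nonempty then (suppZ W).min' h else d + 1

/-- `D : E → E` is an order-matching clearing operator: it maps into `L`, its fixed
points are exactly `L`, and, with `Z(X) = X − D(X)` (computed in `ℤ^d × ℤ^d`), the
conditions (A1)–(A4) of Definition 2.2 hold. -/
def IsOrderMatchingClearing {d : ℕ} (D : E d → E d) : Prop :=
  (∀ X : E d, D X ∈ Lset d) ∧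
  (∀ X : E d, X ∈ Lset d ↔ D X = X) ∧
  (∀ X : E d,
    -- (A1): the executed orders `Z(X) = X − D(X)` have nonnegative entries
    (∀ j, (D X).1 j ≤ X.1 j ∧ (D X).2 j ≤ X.2 j) ∧
    -- (A2): `|Z(X)⁺| = |Z(X)⁻|`
    (∑ j, ((X.1 j : ℤ) - ((D X).1 j : ℤ))) = (∑ j, ((X.2 j : ℤ) - ((D X).2 j : ℤ))) ∧
    -- (A3): `sup supp(Z(X)⁻) ≤ inf supp(Z(X)⁺)`
    supSuppZ (fun j => (X.2 j : ℤ) - ((D X).2 j : ℤ)) ≤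
      infSuppZ (fun j => (X.1 j : ℤ) - ((D X).1 j : ℤ)) ∧
    -- (A4): `sup supp(Z(X)⁻) ≤ inf supp(D(X)⁻)` and `inf supp(Z(X)⁺) ≥ sup supp(D(X)⁺)`
    supSuppZ (fun j => (X.2 j : ℤ) - ((D X).2 j : ℤ)) ≤ infSupp (D X).2 ∧
    supSupp (D X).1 ≤ infSuppZ (fun j => (X.1 j : ℤ) - ((D X).1 j : ℤ)))



section Aux

variable {d : ℕ}

/-! ### Basic facts about `SX`, `BX`, `gX`, `ent` -/

lemma ent_apply (z : Fin d → ℕ) (j : Fin d) : ent z ((j : ℕ) + 1) = z j := by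
  unfold ent
  rw [dif_pos ⟨Nat.succ_le_succ (Nat.zero_le _), j.isLt⟩]
  exact congrArg z (Fin.ext (by simp))

lemma ent_eq_zero_of_out (z : Fin d → ℕ) (k : ℕ) (h : k = 0 ∨ d < k) : ent z k = 0 := by
  unfold ent
  rw [dif_neg (by omega)]

lemma SX_mono (X : E d) : Monotone (SX X) := by
  intro k l hkl
  apply Finset.sum_le_sum
  intro j _
  split_ifs <;> omega

lemma BX_anti (X : E d) : Antitone (BX X) := by
  intro k l hkl
  apply Finset.sum_le_sum
  intro j _
  split_ifs <;> omega

lemma gX_mono (X : E d) : Monotone (gX X) := by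
  intro k l hkl
  have h1 := SX_mono X hkl
  have h2 := BX_anti X hkl
  unfold gX
  omega

lemma sum_ite_price {M : Type*} [AddCommMonoid M] (f : Fin d → M) (k : ℕ)
    (h1 : 1 ≤ k) (h2 : k ≤ d) :
    (∑ j : Fin d, if (j : ℕ) + 1 = k then f j else 0) = f ⟨k - 1, by omega⟩ := by
  rw [Finset.sum_eq_single (⟨k - 1, by omega⟩ : Fin d)]
  · rw [if_pos (by simp; omega)]
  · intro b _ hb
    rw [if_neg]
    intro hc
    exact hb (Fin.ext (by simp at hc ⊢; omega))
  · intro h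
    exact absurd (Finset.mem_univ _) h

lemma sum_ite_price_zero {M : Type*} [AddCommMonoid M] (f : Fin d → M) (k : ℕ)
    (h : k = 0 ∨ d < k) :
    (∑ j : Fin d, if (j : ℕ) + 1 = k then f j else 0) = 0 := by
  apply Finset.sum_eq_zero
  intro j _
  rw [if_neg]
  have := j.isLt
  omega

lemma sum_ite_price_ent (z : Fin d → ℕ) (k : ℕ) :
    (∑ j : Fin d, if (j : ℕ) + 1 = k then z j else 0) = ent z k := by
  by_cases h : 1 ≤ k ∧ k ≤ d
  · rw [sum_ite_price z k h.1 h.2]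
    unfold ent
    rw [dif_pos h]
  · rw [sum_ite_price_zero z k (by omega), ent_eq_zero_of_out z k (by omega)]

lemma SX_zero (X : E d) : SX X 0 = 0 := by
  apply Finset.sum_eq_zero
  intro j _
  rw [if_neg (by omega)]

lemma BX_top (X : E d) (k : ℕ) (hk : d < k) : BX X k = 0 := by
  apply Finset.sum_eq_zero
  intro j _
  rw [if_neg]
  have := j.isLt
  omega

lemma SX_succ (X : E d) (k : ℕ) : SX X (k + 1) = SX X k + ent X.2 (k + 1) := by
  unfold SX
  rw [← sum_ite_price_ent X.2 (k + 1), ← Finset.sum_add_distrib]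
  apply Finset.sum_congr rfl
  intro j _
  split_ifs <;> omega

lemma BX_succ (X : E d) (k : ℕ) : BX X k = BX X (k + 1) + ent X.1 k := by
  unfold BX
  rw [← sum_ite_price_ent X.1 k, ← Finset.sum_add_distrib]
  apply Finset.sum_congr rfl
  intro j _
  split_ifs <;> omega

lemma ent_le_SX (X : E d) (j : Fin d) : X.2 j ≤ SX X ((j : ℕ) + 1) := by
  unfold SX
  calc X.2 j = (if (j : ℕ) + 1 ≤ (j : ℕ) + 1 then X.2 j else 0) := by rw [if_pos le_rfl]
    _ ≤ _ := Finset.single_le_sum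
      (f := fun i : Fin d => if (i : ℕ) + 1 ≤ (j : ℕ) + 1 then X.2 i else 0)
      (fun _ _ => Nat.zero_le _) (Finset.mem_univ j)

lemma ent_le_BX (X : E d) (j : Fin d) : X.1 j ≤ BX X ((j : ℕ) + 1) := by
  unfold BX
  calc X.1 j = (if (j : ℕ) + 1 ≤ (j : ℕ) + 1 then X.1 j else 0) := by rw [if_pos le_rfl]
    _ ≤ _ := Finset.single_le_sum
      (f := fun i : Fin d => if (j : ℕ) + 1 ≤ (i : ℕ) + 1 then X.1 i else 0)
      (fun _ _ => Nat.zero_le _) (Finset.mem_univ j)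

lemma gX_zero_nonpos (X : E d) : gX X 0 ≤ 0 := by
  unfold gX
  rw [SX_zero]
  omega

lemma gX_top_nonneg (X : E d) : 0 ≤ gX X (d + 1) := by
  unfold gX
  rw [BX_top X (d + 1) (by omega)]
  omega

/-! ### Facts about `pA` and `pB` -/

lemma pB_le (X : E d) : pB X ≤ d := by
  apply Finset.sup_le
  intro k hk
  simp only [Finset.mem_filter, Finset.mem_Icc] at hk
  exact hk.1.2

lemma pA_pos (X : E d) : 1 ≤ pA X := by
  unfold pA
  split_ifs with h
  · have := Finset.min'_mem _ h
    simp only [Finset.mem_filter, Finset.mem_Icc] at this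
    exact this.1.1
  · omega

lemma pA_le (X : E d) : pA X ≤ d + 1 := by
  unfold pA
  split_ifs with h
  · have := Finset.min'_mem _ h
    simp only [Finset.mem_filter, Finset.mem_Icc] at this
    omega
  · omega

lemma gX_pB_neg (X : E d) (h : 1 ≤ pB X) : gX X (pB X) < 0 := by
  have hne : (((Finset.Icc 1 d).filter fun k => gX X k < 0)).Nonempty := by
    by_contra h'
    rw [Finset.not_nonempty_iff_eq_empty] at h'
    unfold pB at h
    rw [h'] at h
    simp at h
  obtain ⟨b, hb, hsup⟩ := Finset.exists_mem_eq_sup _ hne id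
  simp only [Finset.mem_filter, Finset.mem_Icc] at hb
  unfold pB
  rw [hsup]
  exact hb.2

lemma le_pB_of (X : E d) (k : ℕ) (h1 : 1 ≤ k) (h2 : k ≤ d) (h : gX X k < 0) :
    k ≤ pB X := by
  apply Finset.le_sup (f := id)
  simp only [Finset.mem_filter, Finset.mem_Icc]
  exact ⟨⟨h1, h2⟩, h⟩

lemma gX_pA_pos (X : E d) (h : pA X ≤ d) : 0 < gX X (pA X) := by
  unfold pA at h ⊢
  split_ifs at h ⊢ with hne
  · have := Finset.min'_mem _ hne
    simp only [Finset.mem_filter, Finset.mem_Icc] at this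
    exact this.2
  · omega

lemma pA_le_of (X : E d) (k : ℕ) (h1 : 1 ≤ k) (h2 : k ≤ d) (h : 0 < gX X k) :
    pA X ≤ k := by
  have hk : k ∈ (Finset.Icc 1 d).filter fun k => 0 < gX X k := by
    simp only [Finset.mem_filter, Finset.mem_Icc]
    exact ⟨⟨h1, h2⟩, h⟩
  unfold pA
  rw [dif_pos ⟨k, hk⟩]
  exact Finset.min'_le _ k hk

lemma pB_lt_pA (X : E d) : pB X < pA X := by
  by_contra hc
  push_neg at hc
  have h1 : 1 ≤ pA X := pA_pos X
  have h2 : pB X ≤ d := pB_le X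
  have h3 := gX_pB_neg X (by omega)
  have h4 := gX_pA_pos X (by omega)
  have h5 := gX_mono X hc
  omega

lemma gX_between (X : E d) (k : ℕ) (h1 : pB X < k) (h2 : k < pA X)
    (h3 : 1 ≤ k) (h4 : k ≤ d) : gX X k = 0 := by
  rcases lt_trichotomy (gX X k) 0 with h | h | h
  · have := le_pB_of X k h3 h4 h
    omega
  · exact h
  · have := pA_le_of X k h3 h4 h
    omega


/-! ### Pointwise description of the clearing operator -/

lemma clearPlus_apply (X : E d) (j : Fin d) :
    clearPlus X j = if (j : ℕ) + 1 < pB X then X.1 j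
      else if (j : ℕ) + 1 = pB X then min (X.1 j) (-(gX X (pB X))).toNat else 0 := by
  by_cases hc : gX X (pB X) ≤ -(ent X.1 (pB X) : ℤ)
  · simp only [clearPlus, if_pos hc, tauLow]
    by_cases h1 : (j : ℕ) + 1 < pB X
    · rw [if_pos (by exact_mod_cast Nat.le_of_lt h1), if_pos h1]
    · by_cases h2 : (j : ℕ) + 1 = pB X
      · rw [if_pos (by exact_mod_cast Nat.le_of_eq h2), if_neg h1, if_pos h2]
        have hent : ent X.1 (pB X) = X.1 j := by rw [← h2, ent_apply]
        rw [hent] at hc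
        omega
      · rw [if_neg (by push_cast; omega), if_neg h1, if_neg h2]
  · simp only [clearPlus, if_neg hc, tauLow, e]
    have hp1 : 1 ≤ pB X := by
      by_contra hp
      have h0 : pB X = 0 := by omega
      rw [h0, ent_eq_zero_of_out X.1 0 (Or.inl rfl)] at hc
      have := gX_zero_nonpos X
      push_cast at hc
      omega
    by_cases h1 : (j : ℕ) + 1 < pB X
    · rw [if_pos (by push_cast; omega), if_neg (by omega), if_pos h1]
      omega
    · by_cases h2 : (j : ℕ) + 1 = pB X
      · rw [if_neg (by push_cast; omega), if_pos h2, if_neg h1, if_pos h2]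
        have hent : ent X.1 (pB X) = X.1 j := by rw [← h2, ent_apply]
        rw [hent] at hc
        omega
      · rw [if_neg (by push_cast; omega), if_neg h2, if_neg h1, if_neg h2]
        omega

lemma clearMinus_apply (X : E d) (j : Fin d) :
    clearMinus X j = if pA X < (j : ℕ) + 1 then X.2 j
      else if (j : ℕ) + 1 = pA X then min (X.2 j) (gX X (pA X)).toNat else 0 := by
  by_cases hc : (ent X.2 (pA X) : ℤ) ≤ gX X (pA X)
  · simp only [clearMinus, if_pos hc, tauHigh]
    by_cases h1 : pA X < (j : ℕ) + 1
    · rw [if_pos (by exact_mod_cast Nat.le_of_lt h1), if_pos h1]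
    · by_cases h2 : (j : ℕ) + 1 = pA X
      · rw [if_pos (by exact_mod_cast Nat.le_of_eq h2.symm), if_neg h1, if_pos h2]
        have hent : ent X.2 (pA X) = X.2 j := by rw [← h2, ent_apply]
        rw [hent] at hc
        omega
      · rw [if_neg (by push_cast; omega), if_neg h1, if_neg h2]
  · simp only [clearMinus, if_neg hc, tauHigh, e]
    have hp1 : pA X ≤ d := by
      by_contra hp
      have h0 : pA X = d + 1 := by have := pA_le X; omega
      rw [h0, ent_eq_zero_of_out X.2 (d + 1) (by omega)] at hc
      have := gX_top_nonneg X
      push_cast at hc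
      omega
    by_cases h1 : pA X < (j : ℕ) + 1
    · rw [if_pos (by push_cast; omega), if_neg (by omega), if_pos h1]
      omega
    · by_cases h2 : (j : ℕ) + 1 = pA X
      · rw [if_neg (by push_cast; omega), if_pos h2, if_neg h1, if_pos h2]
        have hent : ent X.2 (pA X) = X.2 j := by rw [← h2, ent_apply]
        rw [hent] at hc
        omega
      · rw [if_neg (by push_cast; omega), if_neg h2, if_neg h1, if_neg h2]
        omega

lemma clearPlus_le (X : E d) (j : Fin d) : clearPlus X j ≤ X.1 j := by
  rw [clearPlus_apply]
  split_ifs <;> omega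

lemma clearMinus_le (X : E d) (j : Fin d) : clearMinus X j ≤ X.2 j := by
  rw [clearMinus_apply]
  split_ifs <;> omega

/-! ### Normalisation of the case conditions -/

lemma condA_plus_iff (X : E d) :
    (gX X (pB X) ≤ -(ent X.1 (pB X) : ℤ)) ↔ SX X (pB X) ≤ BX X (pB X + 1) := by
  have h := BX_succ X (pB X)
  unfold gX
  omega

lemma condA_minus_iff (X : E d) :
    ((ent X.2 (pA X) : ℤ) ≤ gX X (pA X)) ↔ BX X (pA X) ≤ SX X (pA X - 1) := by
  have h1 : 1 ≤ pA X := pA_pos X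
  have h := SX_succ X (pA X - 1)
  rw [Nat.sub_add_cancel h1] at h
  unfold gX
  omega


/-! ### Executed volumes -/

lemma sum_clearPlus (X : E d) :
    ∑ j, ((X.1 j : ℤ) - clearPlus X j) =
      (max (SX X (pB X)) (BX X (pB X + 1)) : ℤ) := by
  have key : ∀ j : Fin d, ((X.1 j : ℤ) - clearPlus X j) =
      (if pB X + 1 ≤ (j : ℕ) + 1 then (X.1 j : ℤ) else 0) +
      (if (j : ℕ) + 1 = pB X then
        ((X.1 j : ℤ) - (min (X.1 j) (-(gX X (pB X))).toNat : ℕ)) else 0) := by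
    intro j
    rw [clearPlus_apply]
    split_ifs <;> push_cast <;> omega
  rw [Finset.sum_congr rfl (fun j _ => key j), Finset.sum_add_distrib]
  have h1 : (∑ j : Fin d, if pB X + 1 ≤ (j : ℕ) + 1 then (X.1 j : ℤ) else 0)
      = (BX X (pB X + 1) : ℤ) := by
    rw [BX, Nat.cast_sum]
    exact Finset.sum_congr rfl (fun j _ => by split_ifs <;> simp)
  rw [h1]
  have hg : gX X (pB X) = (SX X (pB X) : ℤ) - (BX X (pB X) : ℤ) := rfl
  rcases Nat.eq_zero_or_pos (pB X) with hp | hp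
  · rw [hp, sum_ite_price_zero _ 0 (Or.inl rfl), SX_zero]
    simp
  · have hpd := pB_le X
    rw [sum_ite_price _ (pB X) hp hpd]
    have hj : ((⟨pB X - 1, by omega⟩ : Fin d) : ℕ) + 1 = pB X := by simp; omega
    have hent : X.1 (⟨pB X - 1, by omega⟩ : Fin d) = ent X.1 (pB X) := by
      conv_rhs => rw [← hj]
      rw [ent_apply]
    rw [hent]
    have hBs := BX_succ X (pB X)
    have hneg := gX_pB_neg X hp
    rw [Nat.min_def, max_def]
    split_ifs <;> omega

lemma sum_clearMinus (X : E d) :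
    ∑ j, ((X.2 j : ℤ) - clearMinus X j) =
      (max (BX X (pA X)) (SX X (pA X - 1)) : ℤ) := by
  have hq1 := pA_pos X
  have key : ∀ j : Fin d, ((X.2 j : ℤ) - clearMinus X j) =
      (if (j : ℕ) + 1 ≤ pA X - 1 then (X.2 j : ℤ) else 0) +
      (if (j : ℕ) + 1 = pA X then
        ((X.2 j : ℤ) - (min (X.2 j) (gX X (pA X)).toNat : ℕ)) else 0) := by
    intro j
    rw [clearMinus_apply]
    split_ifs <;> push_cast <;> omega
  rw [Finset.sum_congr rfl (fun j _ => key j), Finset.sum_add_distrib]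
  have h1 : (∑ j : Fin d, if (j : ℕ) + 1 ≤ pA X - 1 then (X.2 j : ℤ) else 0)
      = (SX X (pA X - 1) : ℤ) := by
    rw [SX, Nat.cast_sum]
    exact Finset.sum_congr rfl (fun j _ => by split_ifs <;> simp)
  rw [h1]
  have hg : gX X (pA X) = (SX X (pA X) : ℤ) - (BX X (pA X) : ℤ) := rfl
  have hSs := SX_succ X (pA X - 1)
  rw [Nat.sub_add_cancel hq1] at hSs
  rcases Nat.lt_or_ge d (pA X) with hq | hq
  · rw [sum_ite_price_zero _ (pA X) (Or.inr hq)]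
    have hB : BX X (pA X) = 0 := BX_top X (pA X) hq
    rw [hB]
    simp
  · rw [sum_ite_price _ (pA X) hq1 hq]
    have hj : ((⟨pA X - 1, by omega⟩ : Fin d) : ℕ) + 1 = pA X := by simp; omega
    have hent : X.2 (⟨pA X - 1, by omega⟩ : Fin d) = ent X.2 (pA X) := by
      conv_rhs => rw [← hj]
      rw [ent_apply]
    rw [hent]
    have hpos := gX_pA_pos X hq
    rw [Nat.min_def, max_def]
    split_ifs <;> omega

lemma vol_eq (X : E d) :
    max (SX X (pB X)) (BX X (pB X + 1)) = max (BX X (pA X)) (SX X (pA X - 1)) := by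
  have hpq := pB_lt_pA X
  have hp := pB_le X
  have hq := pA_le X
  have hq1 := pA_pos X
  by_cases h : pA X = pB X + 1
  · rw [h]
    simp only [Nat.add_sub_cancel]
    exact Nat.max_comm _ _
  · have h1 : pB X + 1 < pA X := by omega
    have hg1 : gX X (pB X + 1) = 0 :=
      gX_between X (pB X + 1) (by omega) (by omega) (by omega) (by omega)
    have hg2 : gX X (pA X - 1) = 0 :=
      gX_between X (pA X - 1) (by omega) (by omega) (by omega) (by omega)
    have e1 : SX X (pB X + 1) = BX X (pB X + 1) := by unfold gX at hg1; omega
    have e2 : SX X (pA X - 1) = BX X (pA X - 1) := by unfold gX at hg2; omega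
    have m1 : SX X (pB X) ≤ SX X (pB X + 1) := SX_mono X (by omega)
    have m2 : SX X (pB X + 1) ≤ SX X (pA X - 1) := SX_mono X (by omega)
    have m3 : BX X (pA X) ≤ BX X (pA X - 1) := BX_anti X (by omega)
    have m4 : BX X (pA X - 1) ≤ BX X (pB X + 1) := BX_anti X (by omega)
    omega

/-! ### Support lemmas -/

lemma mem_supp_iff {Z : Fin d → ℕ} {m : ℕ} :
    m ∈ supp Z ↔ ∃ j : Fin d, 0 < Z j ∧ (j : ℕ) + 1 = m := by
  simp [supp]

lemma mem_suppZ_iff {W : Fin d → ℤ} {m : ℕ} :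
    m ∈ suppZ W ↔ ∃ j : Fin d, 0 < W j ∧ (j : ℕ) + 1 = m := by
  simp [suppZ]

lemma supSupp_le {Z : Fin d → ℕ} {n : ℕ}
    (h : ∀ j : Fin d, 0 < Z j → (j : ℕ) + 1 ≤ n) : supSupp Z ≤ n := by
  apply Finset.sup_le
  intro m hm
  obtain ⟨j, hj, rfl⟩ := mem_supp_iff.1 hm
  exact h j hj

lemma le_infSupp {Z : Fin d → ℕ} {n : ℕ} (hn : n ≤ d + 1)
    (h : ∀ j : Fin d, 0 < Z j → n ≤ (j : ℕ) + 1) : n ≤ infSupp Z := by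
  unfold infSupp
  split_ifs with hne
  · apply Finset.le_min'
    intro m hm
    obtain ⟨j, hj, rfl⟩ := mem_supp_iff.1 hm
    exact h j hj
  · exact hn

lemma supSuppZ_le {W : Fin d → ℤ} {n : ℕ}
    (h : ∀ j : Fin d, 0 < W j → (j : ℕ) + 1 ≤ n) : supSuppZ W ≤ n := by
  apply Finset.sup_le
  intro m hm
  obtain ⟨j, hj, rfl⟩ := mem_suppZ_iff.1 hm
  exact h j hj

lemma le_infSuppZ {W : Fin d → ℤ} {n : ℕ} (hn : n ≤ d + 1)
    (h : ∀ j : Fin d, 0 < W j → n ≤ (j : ℕ) + 1) : n ≤ infSuppZ W := by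
  unfold infSuppZ
  split_ifs with hne
  · apply Finset.le_min'
    intro m hm
    obtain ⟨j, hj, rfl⟩ := mem_suppZ_iff.1 hm
    exact h j hj
  · exact hn

lemma le_supSupp {Z : Fin d → ℕ} (j : Fin d) (h : 0 < Z j) :
    (j : ℕ) + 1 ≤ supSupp Z :=
  Finset.le_sup (f := id) (mem_supp_iff.2 ⟨j, h, rfl⟩)

lemma infSupp_le {Z : Fin d → ℕ} (j : Fin d) (h : 0 < Z j) :
    infSupp Z ≤ (j : ℕ) + 1 := by
  have hmem : (j : ℕ) + 1 ∈ supp Z := mem_supp_iff.2 ⟨j, h, rfl⟩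
  unfold infSupp
  rw [dif_pos ⟨_, hmem⟩]
  exact Finset.min'_le _ _ hmem

lemma supSupp_exists {Z : Fin d → ℕ} (h : 1 ≤ supSupp Z) :
    ∃ j : Fin d, (j : ℕ) + 1 = supSupp Z ∧ 0 < Z j := by
  have hne : (supp Z).Nonempty := by
    by_contra h'
    rw [Finset.not_nonempty_iff_eq_empty] at h'
    unfold supSupp at h
    rw [h'] at h
    simp at h
  obtain ⟨m, hm, hsup⟩ := Finset.exists_mem_eq_sup _ hne id
  obtain ⟨j, hj, rfl⟩ := mem_supp_iff.1 hm
  exact ⟨j, by rw [supSupp, hsup]; rfl, hj⟩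

lemma infSupp_exists {Z : Fin d → ℕ} (h : infSupp Z ≤ d) :
    ∃ j : Fin d, (j : ℕ) + 1 = infSupp Z ∧ 0 < Z j := by
  unfold infSupp at h ⊢
  split_ifs at h ⊢ with hne
  · have hmem := Finset.min'_mem _ hne
    obtain ⟨j, hj, hjm⟩ := mem_supp_iff.1 hmem
    exact ⟨j, hjm, hj⟩
  · omega

lemma infSupp_le_succ {Z : Fin d → ℕ} : infSupp Z ≤ d + 1 := by
  unfold infSupp
  split_ifs with hne
  · have hmem := Finset.min'_mem _ hne
    obtain ⟨j, hj, hjm⟩ := mem_supp_iff.1 hmem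
    have := j.isLt
    omega
  · exact le_refl _

lemma one_le_infSupp {Z : Fin d → ℕ} : 1 ≤ infSupp Z :=
  le_infSupp (by omega) (fun j _ => by omega)

lemma supSupp_le_d {Z : Fin d → ℕ} : supSupp Z ≤ d :=
  supSupp_le (fun j _ => j.isLt)


/-! ### Behaviour on admissible configurations -/

lemma SX_eq_zero_of_lt (X : E d) {k : ℕ} (h : k < infSupp X.2) : SX X k = 0 := by
  apply Finset.sum_eq_zero
  intro j _
  split_ifs with hj
  · by_contra hne
    have h0 : 0 < X.2 j := Nat.pos_of_ne_zero hne
    have := infSupp_le j h0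
    omega
  · rfl

lemma BX_eq_zero_of_gt (X : E d) {k : ℕ} (h : supSupp X.1 < k) : BX X k = 0 := by
  apply Finset.sum_eq_zero
  intro j _
  split_ifs with hj
  · by_contra hne
    have h0 : 0 < X.1 j := Nat.pos_of_ne_zero hne
    have := le_supSupp j h0
    omega
  · rfl

lemma BX_pos_of (X : E d) {k : ℕ} (h1 : 1 ≤ k) (h2 : k ≤ supSupp X.1) :
    0 < BX X k := by
  obtain ⟨j, hj, hjpos⟩ := supSupp_exists (Z := X.1) (by omega)
  have hterm : X.1 j ≤ BX X ((j : ℕ) + 1) := ent_le_BX X j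
  have hmono := BX_anti X (show k ≤ (j : ℕ) + 1 by omega)
  omega

lemma SX_pos_of (X : E d) {k : ℕ} (hk : infSupp X.2 ≤ k) (hd : infSupp X.2 ≤ d) :
    0 < SX X k := by
  obtain ⟨j, hj, hjpos⟩ := infSupp_exists hd
  have hterm : X.2 j ≤ SX X ((j : ℕ) + 1) := ent_le_SX X j
  have hmono := SX_mono X (show (j : ℕ) + 1 ≤ k by omega)
  omega

lemma pB_eq_bid (X : E d) (h : bid X < ask X) : pB X = bid X := by
  apply le_antisymm
  · apply Finset.sup_le
    intro k hk
    simp only [Finset.mem_filter, Finset.mem_Icc] at hk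
    obtain ⟨⟨hk1, hk2⟩, hkg⟩ := hk
    show k ≤ bid X
    by_contra hc
    push_neg at hc
    have hB : BX X k = 0 := BX_eq_zero_of_gt X hc
    have hg : gX X k = (SX X k : ℤ) - (BX X k : ℤ) := rfl
    omega
  · rcases Nat.eq_zero_or_pos (bid X) with h0 | h0
    · omega
    · apply le_pB_of X (bid X) h0 supSupp_le_d
      have hS : SX X (bid X) = 0 := SX_eq_zero_of_lt X h
      have hB : 0 < BX X (bid X) := BX_pos_of X h0 le_rfl
      unfold gX
      omega

lemma pA_eq_ask (X : E d) (h : bid X < ask X) : pA X = ask X := by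
  apply le_antisymm
  · rcases Nat.lt_or_ge d (ask X) with ha | ha
    · have h1 := pA_le X
      have h2 : infSupp X.2 ≤ d + 1 := infSupp_le_succ
      have e : ask X = infSupp X.2 := rfl
      show pA X ≤ infSupp X.2
      omega
    · apply pA_le_of X (ask X) one_le_infSupp ha
      have hS : 0 < SX X (ask X) := SX_pos_of X le_rfl ha
      have hB : BX X (ask X) = 0 := BX_eq_zero_of_gt X h
      unfold gX
      omega
  · unfold pA
    split_ifs with hne
    · apply Finset.le_min'
      intro k hk
      simp only [Finset.mem_filter, Finset.mem_Icc] at hk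
      obtain ⟨⟨hk1, hk2⟩, hkg⟩ := hk
      by_contra hc
      push_neg at hc
      have hS : SX X k = 0 := SX_eq_zero_of_lt X hc
      have hg : gX X k = (SX X k : ℤ) - (BX X k : ℤ) := rfl
      omega
    · have h2 : infSupp X.2 ≤ d + 1 := infSupp_le_succ
      show ask X ≤ d + 1
      exact h2

lemma clear_into (X : E d) : clear X ∈ Lset d := by
  have h1 : supSupp (clearPlus X) ≤ pB X := by
    apply supSupp_le
    intro j hj
    by_contra hc
    push_neg at hc
    rw [clearPlus_apply, if_neg (by omega), if_neg (by omega)] at hj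
    exact lt_irrefl 0 hj
  have h2 : pA X ≤ infSupp (clearMinus X) := by
    apply le_infSupp (pA_le X)
    intro j hj
    by_contra hc
    push_neg at hc
    rw [clearMinus_apply, if_neg (by omega), if_neg (by omega)] at hj
    exact lt_irrefl 0 hj
  have h3 := pB_lt_pA X
  show bid (clear X) < ask (clear X)
  have e1 : bid (clear X) = supSupp (clearPlus X) := rfl
  have e2 : ask (clear X) = infSupp (clearMinus X) := rfl
  omega

lemma clear_of_mem (X : E d) (h : X ∈ Lset d) : clear X = X := by
  have hba : bid X < ask X := h
  have hpb := pB_eq_bid X hba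
  have hpa := pA_eq_ask X hba
  have hb : bid X = supSupp X.1 := rfl
  have ha : ask X = infSupp X.2 := rfl
  refine Prod.ext ?_ ?_
  · funext j
    show clearPlus X j = X.1 j
    rw [clearPlus_apply]
    by_cases h1 : (j : ℕ) + 1 < pB X
    · rw [if_pos h1]
    · by_cases h2 : (j : ℕ) + 1 = pB X
      · rw [if_neg h1, if_pos h2]
        have hS : SX X (pB X) = 0 := by
          rw [hpb]
          exact SX_eq_zero_of_lt X hba
        have hBj : X.1 j ≤ BX X ((j : ℕ) + 1) := ent_le_BX X j
        rw [h2] at hBj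
        have hg : gX X (pB X) = (SX X (pB X) : ℤ) - (BX X (pB X) : ℤ) := rfl
        omega
      · rw [if_neg h1, if_neg h2]
        by_contra hne
        have h0 : 0 < X.1 j := Nat.pos_of_ne_zero (fun hh => hne hh.symm)
        have := le_supSupp j h0
        omega
  · funext j
    show clearMinus X j = X.2 j
    rw [clearMinus_apply]
    by_cases h1 : pA X < (j : ℕ) + 1
    · rw [if_pos h1]
    · by_cases h2 : (j : ℕ) + 1 = pA X
      · rw [if_neg h1, if_pos h2]
        have hB : BX X (pA X) = 0 := by
          rw [hpa]
          exact BX_eq_zero_of_gt X hba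
        have hSj : X.2 j ≤ SX X ((j : ℕ) + 1) := ent_le_SX X j
        rw [h2] at hSj
        have hg : gX X (pA X) = (SX X (pA X) : ℤ) - (BX X (pA X) : ℤ) := rfl
        omega
      · rw [if_neg h1, if_neg h2]
        by_contra hne
        have h0 : 0 < X.2 j := Nat.pos_of_ne_zero (fun hh => hne hh.symm)
        have := infSupp_le j h0
        omega

/-! ### Support bounds for the executed orders -/

lemma Zp_eq_zero_of_lt (X : E d) (j : Fin d) (hj : (j : ℕ) + 1 < pB X) :
    (X.1 j : ℤ) - clearPlus X j = 0 := by
  rw [clearPlus_apply, if_pos hj]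
  omega

lemma Zm_eq_zero_of_gt (X : E d) (j : Fin d) (hj : pA X < (j : ℕ) + 1) :
    (X.2 j : ℤ) - clearMinus X j = 0 := by
  rw [clearMinus_apply, if_pos hj]
  omega

lemma Zp_eq_zero_at_pB (X : E d) (j : Fin d) (hj : (j : ℕ) + 1 = pB X)
    (hcase : SX X (pB X) ≤ BX X (pB X + 1)) :
    (X.1 j : ℤ) - clearPlus X j = 0 := by
  rw [clearPlus_apply, if_neg (by omega), if_pos hj]
  have hBs := BX_succ X (pB X)
  have hent : ent X.1 (pB X) = X.1 j := by rw [← hj, ent_apply]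
  have hg : gX X (pB X) = (SX X (pB X) : ℤ) - (BX X (pB X) : ℤ) := rfl
  omega

lemma Zm_eq_zero_at_pA (X : E d) (j : Fin d) (hj : (j : ℕ) + 1 = pA X)
    (hcase : BX X (pA X) ≤ SX X (pA X - 1)) :
    (X.2 j : ℤ) - clearMinus X j = 0 := by
  rw [clearMinus_apply, if_neg (by omega), if_pos hj]
  have hq1 := pA_pos X
  have hSs := SX_succ X (pA X - 1)
  rw [Nat.sub_add_cancel hq1] at hSs
  have hent : ent X.2 (pA X) = X.2 j := by rw [← hj, ent_apply]
  have hg : gX X (pA X) = (SX X (pA X) : ℤ) - (BX X (pA X) : ℤ) := rfl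
  omega

/-- When the spread is wide (`pA > pB + 1`), there are no sell orders strictly
between `pB+1` and `pA`. -/
lemma Xminus_eq_zero_between (X : E d) (j : Fin d) (h1 : pB X + 1 < (j : ℕ) + 1)
    (h2 : (j : ℕ) + 1 < pA X) : X.2 j = 0 := by
  have hpq := pB_lt_pA X
  have hqle := pA_le X
  have hg1 : gX X (pB X + 1) = 0 :=
    gX_between X (pB X + 1) (by omega) (by omega) (by omega) (by omega)
  have hg2 : gX X (pA X - 1) = 0 :=
    gX_between X (pA X - 1) (by omega) (by omega) (by omega) (by omega)
  have e1 : SX X (pB X + 1) = BX X (pB X + 1) := by unfold gX at hg1; omega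
  have e2 : SX X (pA X - 1) = BX X (pA X - 1) := by unfold gX at hg2; omega
  have hSs := SX_succ X (j : ℕ)
  have hent : ent X.2 ((j : ℕ) + 1) = X.2 j := ent_apply X.2 j
  have m1 : SX X (pB X + 1) ≤ SX X (j : ℕ) := SX_mono X (by omega)
  have m2 : SX X ((j : ℕ) + 1) ≤ SX X (pA X - 1) := SX_mono X (by omega)
  have m3 : BX X (pA X - 1) ≤ BX X (pB X + 1) := BX_anti X (by omega)
  omega

end Aux

/-- Proposition 2.4 of Cont–Degond–Xuan: the explicitly defined map
`clear` is the order-matching clearing operator: it maps `E` into `L`, its set of fixed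
points is exactly `L`, and the executed orders `Z(X) = X − C(X)` satisfy (A1)–(A4). -/
theorem clear_isOrderMatchingClearing (d : ℕ) (hd : 1 ≤ d) :
    IsOrderMatchingClearing (clear (d := d)) := by
  refine ⟨fun X => clear_into X, ?_, ?_⟩
  · intro X
    exact ⟨fun h => clear_of_mem X h, fun h => h ▸ clear_into X⟩
  · intro X
    have hpq := pB_lt_pA X
    have hple := pB_le X
    have hqle := pA_le X
    have hq1 := pA_pos X
    refine ⟨?_, ?_, ?_, ?_, ?_⟩
    · -- (A1)
      intro j
      exact ⟨clearPlus_le X j, clearMinus_le X j⟩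
    · -- (A2)
      show (∑ j, ((X.1 j : ℤ) - clearPlus X j)) = ∑ j, ((X.2 j : ℤ) - clearMinus X j)
      rw [sum_clearPlus, sum_clearMinus]
      exact_mod_cast congrArg (fun n : ℕ => (n : ℤ)) (vol_eq X)
    · -- (A3)
      show supSuppZ (fun j => (X.2 j : ℤ) - clearMinus X j) ≤
        infSuppZ (fun j => (X.1 j : ℤ) - clearPlus X j)
      obtain ⟨n, hn1, hn2, hn3⟩ : ∃ n, n ≤ d + 1 ∧
          (∀ j : Fin d, 0 < (X.2 j : ℤ) - clearMinus X j → (j : ℕ) + 1 ≤ n) ∧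
          (∀ j : Fin d, 0 < (X.1 j : ℤ) - clearPlus X j → n ≤ (j : ℕ) + 1) := by
        by_cases hmid : pA X = pB X + 1
        · by_cases hcA : SX X (pB X) ≤ BX X (pB X + 1)
          · refine ⟨pB X + 1, by omega, ?_, ?_⟩
            · intro j hj
              by_contra hc
              push_neg at hc
              rw [Zm_eq_zero_of_gt X j (by omega)] at hj
              exact lt_irrefl 0 hj
            · intro j hj
              by_contra hc
              push_neg at hc
              rcases Nat.lt_or_ge ((j : ℕ) + 1) (pB X) with hlt | hge
              · rw [Zp_eq_zero_of_lt X j hlt] at hj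
                exact lt_irrefl 0 hj
              · rw [Zp_eq_zero_at_pB X j (by omega) hcA] at hj
                exact lt_irrefl 0 hj
          · -- here `B (pA) = B (pB+1) < S (pB) = S (pA - 1)`, so case A⁻ holds
            have hcB : BX X (pA X) ≤ SX X (pA X - 1) := by
              have e1 : BX X (pA X) = BX X (pB X + 1) := by rw [hmid]
              have e2 : SX X (pA X - 1) = SX X (pB X) := by
                rw [hmid, Nat.add_sub_cancel]
              omega
            refine ⟨pB X, by omega, ?_, ?_⟩
            · intro j hj
              by_contra hc
              push_neg at hc
              rcases Nat.lt_or_ge (pA X) ((j : ℕ) + 1) with hgt | hle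
              · rw [Zm_eq_zero_of_gt X j hgt] at hj
                exact lt_irrefl 0 hj
              · rw [Zm_eq_zero_at_pA X j (by omega) hcB] at hj
                exact lt_irrefl 0 hj
            · intro j hj
              by_contra hc
              push_neg at hc
              rw [Zp_eq_zero_of_lt X j (by omega)] at hj
              exact lt_irrefl 0 hj
        · -- wide spread : `pB + 1 < pA`
          have h1 : pB X + 1 < pA X := by omega
          have hg1 : gX X (pB X + 1) = 0 :=
            gX_between X (pB X + 1) (by omega) (by omega) (by omega) (by omega)
          have hg2 : gX X (pA X - 1) = 0 :=
            gX_between X (pA X - 1) (by omega) (by omega) (by omega) (by omega)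
          have e1 : SX X (pB X + 1) = BX X (pB X + 1) := by unfold gX at hg1; omega
          have e2 : SX X (pA X - 1) = BX X (pA X - 1) := by unfold gX at hg2; omega
          refine ⟨pB X + 1, by omega, ?_, ?_⟩
          · intro j hj
            by_contra hc
            push_neg at hc
            rcases Nat.lt_or_ge (pA X) ((j : ℕ) + 1) with hgt | hle
            · rw [Zm_eq_zero_of_gt X j hgt] at hj
              exact lt_irrefl 0 hj
            · by_cases hjq : (j : ℕ) + 1 = pA X
              · have hcB : BX X (pA X) ≤ SX X (pA X - 1) := by
                  have m3 : BX X (pA X) ≤ BX X (pA X - 1) := BX_anti X (by omega)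
                  omega
                rw [Zm_eq_zero_at_pA X j hjq hcB] at hj
                exact lt_irrefl 0 hj
              · have h0 : X.2 j = 0 :=
                  Xminus_eq_zero_between X j (by omega) (by omega)
                have hle2 := clearMinus_le X j
                omega
          · intro j hj
            by_contra hc
            push_neg at hc
            rcases Nat.lt_or_ge ((j : ℕ) + 1) (pB X) with hlt | hge
            · rw [Zp_eq_zero_of_lt X j hlt] at hj
              exact lt_irrefl 0 hj
            · have hcA : SX X (pB X) ≤ BX X (pB X + 1) := by
                have m1 : SX X (pB X) ≤ SX X (pB X + 1) := SX_mono X (by omega)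
                omega
              rw [Zp_eq_zero_at_pB X j (by omega) hcA] at hj
              exact lt_irrefl 0 hj
      exact le_trans (supSuppZ_le hn2) (le_infSuppZ hn1 hn3)
    · -- (A4), sell side
      show supSuppZ (fun j => (X.2 j : ℤ) - clearMinus X j) ≤ infSupp (clearMinus X)
      refine le_trans (supSuppZ_le (n := pA X) ?_) (le_infSupp (pA_le X) ?_)
      · intro j hj
        by_contra hc
        push_neg at hc
        rw [Zm_eq_zero_of_gt X j hc] at hj
        exact lt_irrefl 0 hj
      · intro j hj
        by_contra hc
        push_neg at hc
        rw [clearMinus_apply, if_neg (by omega), if_neg (by omega)] at hj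
        exact lt_irrefl 0 hj
    · -- (A4), buy side
      show supSupp (clearPlus X) ≤ infSuppZ (fun j => (X.1 j : ℤ) - clearPlus X j)
      refine le_trans (supSupp_le (n := pB X) ?_) (le_infSuppZ (by omega) ?_)
      · intro j hj
        by_contra hc
        push_neg at hc
        rw [clearPlus_apply, if_neg (by omega), if_neg (by omega)] at hj
        exact lt_irrefl 0 hj
      · intro j hj
        by_contra hc
        push_neg at hc
        rw [Zp_eq_zero_of_lt X j (by omega)] at hj
        exact lt_irrefl 0 hj

end OB
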